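/- Let L₊ := span{Û^N(b₀,b₀) : N ∈ ℤ} and L₋ := span{Û^N(b₀,−b₀) : N ∈ ℤ}. Then {x,y} = 0 for all x in the closure of L₊ and y in the closure of L₋; {x,x} is a positive real number for every nonzero x in the closure of L₊; {x,x} is a negative real number for every nonzero x in the closure of L₋; and the closure of L₊ intersects the closure of L₋ only in {0}. -/

import Mathlib

noncomputable section

/-- `Hsp` is the complex Hilbert space `ℓ²(ℤ)` of square-summable bilateral
complex sequences. -/
abbrev Hsp : Type := lp (fun _ : ℤ => ℂ) 2

/-- `e n` is the standard orthonormal basis vector `b_n` (indicator sequence of `n`). -/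
noncomputable def e (n : ℤ) : Hsp := lp.single 2 n 1

/-- The indefinite inner product `{(x,y),(x',y')} := ⟨x,y'⟩ + ⟨y,x'⟩` on `Hsp × Hsp`. -/
def indef (p q : Hsp × Hsp) : ℂ :=
  (inner ℂ p.1 q.2 : ℂ) + (inner ℂ p.2 q.1 : ℂ)

/-! Since `U^N b₀ = (u_N/u_0) b_N` and `⟨b_n, (U*)^{-N} b₀⟩ = ⟨U^{-N} b_n, b₀⟩`, the generator
`Û^N(b₀, ±b₀)` is `(x, ±y)` with `x, y` supported at `N` and `x_N = t_N y_N`, where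
`t_n = |u_n/u_0|² > 0`. So `L₊` and `L₋` lie in the closed graphs `{(x, y) | x_n = t_n y_n}` and
`{(x, y) | x_n = -t_n y_n}`. On these graphs `{(x,y),(x,y)} = ±2 ∑ t_n |y_n|²`, and the two graphs
are `{,}`-orthogonal because `t` is real; a vector in both closures is therefore isotropic and
positive, hence zero. -/

open scoped ComplexConjugate InnerProductSpace

lemma e_apply (n m : ℤ) : e n m = if m = n then 1 else 0 := by
  simp [e, Pi.single_apply]

lemma inner_e_left (n : ℤ) (f : Hsp) : ⟪e n, f⟫_ℂ = f n := by
  simp [e, lp.inner_single_left]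

lemma zpow_apply_e_of_apply_e {w : ℤ → ℂ} (hw : ∀ n, w n ≠ 0) {V : Hsp ≃L[ℂ] Hsp}
    (hV : ∀ n, V (e n) = (w (n + 1) / w n) • e (n + 1)) (k : ℤ) :
    ∀ m, (V ^ k) (e m) = (w (m + k) / w m) • e (m + k) := by
  have hVinv (m : ℤ) : V⁻¹ (e m) = (w (m - 1) / w m) • e (m - 1) := by
    apply V.injective
    rw [map_smul, hV, sub_add_cancel, smul_smul, div_mul_div_cancel₀ (hw _), div_self (hw _),
      one_smul]
    exact V.apply_symm_apply (e m)
  induction k using Int.induction_on with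
  | zero => intro m; simp [div_self (hw m)]; rfl
  | succ k ih =>
    intro m
    rw [zpow_add_one]
    show (V ^ (k : ℤ)) (V (e m)) = _
    rw [hV, map_smul, ih, smul_smul, ← add_assoc, add_right_comm, div_mul_div_cancel₀' (hw _)]
  | pred k ih =>
    intro m
    rw [zpow_sub_one]
    show (V ^ (-(k : ℤ))) (V⁻¹ (e m)) = _
    rw [hVinv, map_smul, ih, smul_smul, ← add_sub_assoc, sub_add_eq_add_sub,
      div_mul_div_cancel₀' (hw _)]

lemma inner_zpow_apply_right {𝕜 E : Type*} [RCLike 𝕜] [NormedAddCommGroup E]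
    [InnerProductSpace 𝕜 E] {U V : E ≃L[𝕜] E} (h : ∀ x y, ⟪x, V y⟫_𝕜 = ⟪U x, y⟫_𝕜) (k : ℤ) :
    ∀ x y, ⟪x, (V ^ k) y⟫_𝕜 = ⟪(U ^ k) x, y⟫_𝕜 := by
  have hinv (x y : E) : ⟪x, V⁻¹ y⟫_𝕜 = ⟪U⁻¹ x, y⟫_𝕜 := by
    have := h (U⁻¹ x) (V⁻¹ y)
    rwa [show V (V⁻¹ y) = y from V.apply_symm_apply y,
      show U (U⁻¹ x) = x from U.apply_symm_apply x, eq_comm] at this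
  induction k using Int.induction_on with
  | zero => intro x y; rfl
  | succ k ih =>
    intro x y
    rw [zpow_add_one, add_comm, zpow_one_add]
    exact (ih x (V y)).trans (h _ y)
  | pred k ih =>
    intro x y
    rw [zpow_sub_one, sub_eq_neg_add, zpow_add, zpow_neg_one]
    exact (ih x (V⁻¹ y)).trans (hinv _ y)

def diagonalGraph (t : ℤ → ℝ) : Submodule ℂ (Hsp × Hsp) where
  carrier := {p | ∀ n, p.1 n = t n * p.2 n}
  add_mem' {p q} hp hq n := by simp [hp n, hq n, mul_add]
  zero_mem' n := by simp
  smul_mem' c p hp n := by simp [hp n, mul_left_comm]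

lemma mem_diagonalGraph {t : ℤ → ℝ} {p : Hsp × Hsp} :
    p ∈ diagonalGraph t ↔ ∀ n, p.1 n = t n * p.2 n := Iff.rfl

lemma isClosed_diagonalGraph (t : ℤ → ℝ) : IsClosed (diagonalGraph t : Set (Hsp × Hsp)) := by
  have hcoord (n : ℤ) : Continuous fun x : Hsp => x n :=
    (continuous_apply n).comp lp.uniformContinuous_coe.continuous
  simp only [diagonalGraph, Submodule.coe_set_mk, AddSubmonoid.coe_set_mk,
    AddSubsemigroup.coe_set_mk, Set.ofPred_forall]
  exact isClosed_iInter fun n => isClosed_eq ((hcoord n).comp continuous_fst)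
    (continuous_const.mul ((hcoord n).comp continuous_snd))

lemma closure_span_subset_diagonalGraph {t : ℤ → ℝ} {v : ℤ → Hsp × Hsp}
    (hv : ∀ N, v N ∈ diagonalGraph t) :
    closure (Submodule.span ℂ (Set.range v) : Set (Hsp × Hsp)) ⊆ diagonalGraph t :=
  closure_minimal (Submodule.span_le.mpr (Set.range_subset_iff.mpr hv))
    (isClosed_diagonalGraph t)

lemma neg_snd_mem_diagonalGraph_neg {t : ℤ → ℝ} {x y : Hsp} :
    (x, -y) ∈ diagonalGraph (-t) ↔ (x, y) ∈ diagonalGraph t := by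
  simp [mem_diagonalGraph]

lemma div_eq_sq_norm_mul_conj_div {a b : ℂ} (ha : a ≠ 0) (hb : b ≠ 0) :
    a / b = ((‖a / b‖ ^ 2 : ℝ) : ℂ) * conj (b / a) := by
  rw [← inv_div a b, map_inv₀]
  push_cast
  rw [← Complex.mul_conj', mul_assoc, mul_inv_cancel₀ (by simp [ha, hb]), mul_one]

lemma zpow_e_zero_mem_diagonalGraph {u : ℤ → ℂ} (hu : ∀ n, u n ≠ 0) {U Ustar : Hsp ≃L[ℂ] Hsp}
    (hU : ∀ n, U (e n) = (u (n + 1) / u n) • e (n + 1))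
    (hUstar : ∀ x y, ⟪x, Ustar y⟫_ℂ = ⟪U x, y⟫_ℂ) (N : ℤ) :
    ((U ^ N) (e 0), (Ustar ^ (-N)) (e 0)) ∈ diagonalGraph fun n => ‖u n / u 0‖ ^ 2 := by
  intro n
  have h1 : (U ^ N) (e 0) n = u N / u 0 * e N n := by
    rw [zpow_apply_e_of_apply_e hu hU, zero_add]; rfl
  have h2 : (Ustar ^ (-N)) (e 0) n = conj (u (n - N) / u n) * e 0 (n - N) := by
    rw [← inner_e_left, inner_zpow_apply_right hUstar, zpow_apply_e_of_apply_e hu hU,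
      inner_smul_left, inner_e_left, ← sub_eq_add_neg]
  simp only [h1, h2, e_apply, sub_eq_zero]
  split_ifs with h
  · subst h
    rw [mul_one, mul_one, sub_self]
    exact div_eq_sq_norm_mul_conj_div (hu _) (hu _)
  · simp

lemma indef_eq_zero_of_mem_diagonalGraph {t : ℤ → ℝ} {p q : Hsp × Hsp}
    (hp : p ∈ diagonalGraph t) (hq : q ∈ diagonalGraph (-t)) : indef p q = 0 := by
  have hterm (n : ℤ) : ⟪p.2 n, q.1 n⟫_ℂ = -⟪p.1 n, q.2 n⟫_ℂ := by
    simp [hp n, hq n]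
    ring
  rw [indef, lp.inner_eq_tsum, lp.inner_eq_tsum, tsum_congr hterm, tsum_neg, add_neg_cancel]

lemma exists_pos_indef_self_of_mem_diagonalGraph {t : ℤ → ℝ} (ht : ∀ n, 0 < t n)
    {p : Hsp × Hsp} (hp : p ∈ diagonalGraph t) (hne : p ≠ 0) :
    ∃ r : ℝ, 0 < r ∧ indef p p = r := by
  obtain ⟨n₀, hn₀⟩ : ∃ n, p.2 n ≠ 0 := by
    by_contra! h
    exact hne (Prod.ext (lp.ext (funext fun n => by simp [hp n, h n])) (lp.ext (funext h)))
  have hterm (n : ℤ) : (⟪p.1 n, p.2 n⟫_ℂ).re = t n * ‖p.2 n‖ ^ 2 := by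
    simp [hp n, Complex.sq_norm, Complex.normSq_apply]
    ring
  have hsum : HasSum (fun n => t n * ‖p.2 n‖ ^ 2) (⟪p.1, p.2⟫_ℂ).re := by
    simpa only [hterm] using Complex.hasSum_re (lp.hasSum_inner p.1 p.2)
  refine ⟨2 * (⟪p.1, p.2⟫_ℂ).re, ?_, ?_⟩
  · have hpos : 0 < t n₀ * ‖p.2 n₀‖ ^ 2 := mul_pos (ht n₀) (by positivity)
    have := hasSum_lt (f := fun _ => 0) (i := n₀)
      (fun n => mul_nonneg (ht n).le (sq_nonneg ‖p.2 n‖)) hpos hasSum_zero hsum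
    linarith
  · rw [indef, ← inner_conj_symm p.2 p.1, Complex.add_conj]

lemma exists_neg_indef_self_of_mem_diagonalGraph_neg {t : ℤ → ℝ} (ht : ∀ n, 0 < t n)
    {p : Hsp × Hsp} (hp : p ∈ diagonalGraph (-t)) (hne : p ≠ 0) :
    ∃ r : ℝ, r < 0 ∧ indef p p = r := by
  have hp' : (p.1, -p.2) ∈ diagonalGraph t := by
    rw [← neg_snd_mem_diagonalGraph_neg, neg_neg]; exact hp
  obtain ⟨r, hr, hpr⟩ := exists_pos_indef_self_of_mem_diagonalGraph ht hp'
    (by simpa [Prod.ext_iff] using hne)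
  refine ⟨-r, by linarith, ?_⟩
  have hflip : indef (p.1, -p.2) (p.1, -p.2) = -indef p p := by simp [indef]; ring
  rw [Complex.ofReal_neg, ← hpr, hflip, neg_neg]

theorem stmt17_general (u : ℤ → ℂ) (hu : ∀ n : ℤ, u n ≠ 0)
    (U Ustar : Hsp ≃L[ℂ] Hsp)
    (hU : ∀ n : ℤ, U (e n) = (u (n + 1) / u n) • e (n + 1))
    (hUstar : (Ustar : Hsp →L[ℂ] Hsp) = ContinuousLinearMap.adjoint (U : Hsp →L[ℂ] Hsp))
    (Lp Lm : Submodule ℂ (Hsp × Hsp))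
    (hLp : Lp = Submodule.span ℂ
      (Set.range fun N : ℤ => (((U ^ N) (e 0), (Ustar ^ (-N)) (e 0)) : Hsp × Hsp)))
    (hLm : Lm = Submodule.span ℂ
      (Set.range fun N : ℤ => (((U ^ N) (e 0), -(Ustar ^ (-N)) (e 0)) : Hsp × Hsp))) :
    (∀ x ∈ closure (Lp : Set (Hsp × Hsp)), ∀ y ∈ closure (Lm : Set (Hsp × Hsp)),
      indef x y = 0) ∧
    (∀ x ∈ closure (Lp : Set (Hsp × Hsp)), x ≠ 0 →
      ∃ r : ℝ, 0 < r ∧ indef x x = (r : ℂ)) ∧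
    (∀ x ∈ closure (Lm : Set (Hsp × Hsp)), x ≠ 0 →
      ∃ r : ℝ, r < 0 ∧ indef x x = (r : ℂ)) ∧
    closure (Lp : Set (Hsp × Hsp)) ∩ closure (Lm : Set (Hsp × Hsp)) = {0} := by
  set t : ℤ → ℝ := fun n => ‖u n / u 0‖ ^ 2
  have ht (n : ℤ) : 0 < t n := by simp [t, hu]
  have hadj (x y : Hsp) : ⟪x, Ustar y⟫_ℂ = ⟪U x, y⟫_ℂ := by
    simpa [← hUstar] using ContinuousLinearMap.adjoint_inner_right (U : Hsp →L[ℂ] Hsp) x y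
  have hgen := zpow_e_zero_mem_diagonalGraph hu hU hadj
  have hLp_sub : closure (Lp : Set (Hsp × Hsp)) ⊆ diagonalGraph t :=
    hLp ▸ closure_span_subset_diagonalGraph hgen
  have hLm_sub : closure (Lm : Set (Hsp × Hsp)) ⊆ diagonalGraph (-t) :=
    hLm ▸ closure_span_subset_diagonalGraph fun N => neg_snd_mem_diagonalGraph_neg.mpr (hgen N)
  have horth (x) (hx : x ∈ closure (Lp : Set (Hsp × Hsp))) (y) (hy : y ∈ closure (Lm : Set _)) :
      indef x y = 0 :=
    indef_eq_zero_of_mem_diagonalGraph (hLp_sub hx) (hLm_sub hy)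
  have hpos (x) (hx : x ∈ closure (Lp : Set (Hsp × Hsp))) (hx0 : x ≠ 0) :
      ∃ r : ℝ, 0 < r ∧ indef x x = r :=
    exists_pos_indef_self_of_mem_diagonalGraph ht (hLp_sub hx) hx0
  refine ⟨horth, hpos,
    fun x hx => exists_neg_indef_self_of_mem_diagonalGraph_neg ht (hLm_sub hx), ?_⟩
  refine Set.eq_singleton_iff_unique_mem.mpr
    ⟨⟨subset_closure Lp.zero_mem, subset_closure Lm.zero_mem⟩, fun x ⟨hxp, hxm⟩ => ?_⟩
  by_contra hx0
  obtain ⟨r, hr, hxr⟩ := hpos x hxp hx0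
  rw [horth x hxp x hxm, eq_comm, Complex.ofReal_eq_zero] at hxr
  exact hr.ne' hxr

/-- With `L₊ := span{Û^N(b₀,b₀) : N ∈ ℤ}` and `L₋ := span{Û^N(b₀,−b₀) : N ∈ ℤ}`,
where `Û^N(b₀,±b₀) = (U^N b₀, ±(U*)^{-N} b₀)`:
`{x,y} = 0` for all `x` in the closure of `L₊` and `y` in the closure of `L₋`;
`{x,x}` is a positive real for every nonzero `x` in the closure of `L₊`;
`{x,x}` is a negative real for every nonzero `x` in the closure of `L₋`;
and the closures of `L₊` and `L₋` intersect only in `{0}`. -/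
theorem stmt17 (u : ℤ → ℂ) (hu : ∀ n : ℤ, u n ≠ 0)
    (hbdd : BddAbove (Set.range fun n : ℤ => ‖u (n + 1) / u n‖))
    (hinf : ∃ δ : ℝ, 0 < δ ∧ ∀ n : ℤ, δ ≤ ‖u (n + 1) / u n‖)
    (U Ustar : Hsp ≃L[ℂ] Hsp)
    (hU : ∀ n : ℤ, U (e n) = (u (n + 1) / u n) • e (n + 1))
    (hUstar : (Ustar : Hsp →L[ℂ] Hsp) = ContinuousLinearMap.adjoint (U : Hsp →L[ℂ] Hsp))
    (Lp Lm : Submodule ℂ (Hsp × Hsp))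
    (hLp : Lp = Submodule.span ℂ
      (Set.range fun N : ℤ => (((U ^ N) (e 0), (Ustar ^ (-N)) (e 0)) : Hsp × Hsp)))
    (hLm : Lm = Submodule.span ℂ
      (Set.range fun N : ℤ => (((U ^ N) (e 0), -(Ustar ^ (-N)) (e 0)) : Hsp × Hsp))) :
    (∀ x ∈ closure (Lp : Set (Hsp × Hsp)), ∀ y ∈ closure (Lm : Set (Hsp × Hsp)),
      indef x y = 0) ∧
    (∀ x ∈ closure (Lp : Set (Hsp × Hsp)), x ≠ 0 →
      ∃ r : ℝ, 0 < r ∧ indef x x = (r : ℂ)) ∧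
    (∀ x ∈ closure (Lm : Set (Hsp × Hsp)), x ≠ 0 →
      ∃ r : ℝ, r < 0 ∧ indef x x = (r : ℂ)) ∧
    closure (Lp : Set (Hsp × Hsp)) ∩ closure (Lm : Set (Hsp × Hsp)) = {0} :=
  stmt17_general u hu U Ustar hU hUstar Lp Lm hLp hLm
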